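/- arXiv:math/9207209 — 4 statements merged into one kernel-verified Lean document; each statement's English description precedes it below -/
import Mathlib

section
/- Let k be a commutative ring, A a unital associative k-algebra, and n ≥ 2. Let μⁿ : A^{⊗n} → A be the k-linear map induced by the n-fold multiplication (a₁, …, aₙ) ↦ a₁a₂⋯aₙ on the n-fold tensor power of A over k. Then the kernel of μⁿ equals the sum over i = 0, …, n−2 of the k-submodules A^{⊗i} ⊗ Ω₁(A) ⊗ A^{⊗(n−2−i)} of A^{⊗n}, i.e. the sum of the images in A^{⊗n} of the canonical maps A^{⊗i} ⊗ Ω₁(A) ⊗ A^{⊗(n−2−i)} → A^{⊗n} induced by the inclusion Ω₁(A) ⊆ A ⊗ A. -/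
/-!
Each generator of the sum is killed by `μⁿ`, because `μⁿ ∘ insertPair g` factors through
`μ : A ⊗ A → A`. Conversely, since `x ⊗ y - xy ⊗ 1 ∈ Ω₁(A)`, modulo the sum one may replace two
adjacent entries `x, y` of an elementary tensor by `xy, 1`. Collapsing from the right gives
`a₁ ⊗ ⋯ ⊗ aₙ ≡ a₁⋯aₙ ⊗ 1 ⊗ ⋯ ⊗ 1`, hence `t ≡ μⁿ(t) ⊗ 1 ⊗ ⋯ ⊗ 1` for every `t`, and every
`t ∈ ker μⁿ` lies in the sum.
-/

open TensorProduct PiTensorProduct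

/-- The `n`-ary multiplication map `μⁿ : A^{⊗n} → A` induced by
`(a₁, …, aₙ) ↦ a₁ a₂ ⋯ aₙ`. -/
noncomputable def nFoldMul (k : Type u) [CommRing k] (A : Type u) [Ring A] [Algebra k A]
    (n : ℕ) : (⨂[k] _ : Fin n, A) →ₗ[k] A :=
  PiTensorProduct.lift (MultilinearMap.mkPiAlgebraFin k n A)

/-- For `i + 2 ≤ n` and outer entries `g`, the canonical `k`-linear map
`A ⊗ A → A^{⊗n}` sending `x ⊗ y` to the elementary tensor whose entries are those of `g`,
except that positions `i` and `i+1` carry `x` and `y`.  Its restriction to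
`Ω₁(A) ⊆ A ⊗ A`, as `g` ranges over all tuples, realizes the canonical map
`A^{⊗i} ⊗ Ω₁(A) ⊗ A^{⊗(n−2−i)} → A^{⊗n}` induced by the inclusion `Ω₁(A) ⊆ A ⊗ A`. -/
noncomputable def insertPair (k : Type u) [CommRing k] (A : Type u) [Ring A] [Algebra k A]
    (n i : ℕ) (h : i + 2 ≤ n) (g : Fin n → A) : A ⊗[k] A →ₗ[k] ⨂[k] _ : Fin n, A :=
  TensorProduct.lift <| LinearMap.mk₂ k
    (fun x y => PiTensorProduct.tprod k
      (Function.update (Function.update g ⟨i, by omega⟩ x) ⟨i + 1, by omega⟩ y))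
    (fun x₁ x₂ y => by
      have hne : (⟨i, by omega⟩ : Fin n) ≠ ⟨i + 1, by omega⟩ := by
        simp [Fin.ext_iff]
      try dsimp only
      rw [Function.update_comm hne, Function.update_comm hne, Function.update_comm hne,
        MultilinearMap.map_update_add]
    )
    (fun c x y => by
      have hne : (⟨i, by omega⟩ : Fin n) ≠ ⟨i + 1, by omega⟩ := by
        simp [Fin.ext_iff]
      try dsimp only
      rw [Function.update_comm hne, Function.update_comm hne,
        MultilinearMap.map_update_smul]
    )
    (fun x y₁ y₂ => by (try dsimp only); rw [MultilinearMap.map_update_add])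
    (fun c x y => by (try dsimp only); rw [MultilinearMap.map_update_smul])

universe u

open Function

theorem List.prod_ofFn_update_update {M : Type*} [Monoid M] {n : ℕ} (g : Fin n → M) (i : ℕ)
    (h : i + 2 ≤ n) (x y : M) :
    (List.ofFn (update (update g ⟨i, by omega⟩ x) ⟨i + 1, by omega⟩ y)).prod =
      ((List.ofFn g).take i).prod * (x * y) * ((List.ofFn g).drop (i + 2)).prod := by
  simp [List.ofFn_eq_map, (List.nodup_finRange n).map_update, List.prod_set, List.take_add_one,
    List.drop_set_of_lt, List.take_set_of_le, mul_assoc, show i < n by omega,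
    show i + 1 < n by omega]

theorem List.prod_ofFn_update_one {M : Type*} [Monoid M] {n : ℕ} (j : Fin n) (a : M) :
    (List.ofFn (update (1 : Fin n → M) j a)).prod = a := by
  simp [List.ofFn_eq_map, (List.nodup_finRange n).map_update, List.prod_set, Pi.one_def,
    List.map_const']

/-- The sum `∑ᵢ A^{⊗i} ⊗ Ω₁(A) ⊗ A^{⊗(n−2−i)}` inside `A^{⊗n}`. -/
noncomputable def omegaSum (k : Type u) [CommRing k] (A : Type u) [Ring A] [Algebra k A]
    (n : ℕ) : Submodule k (⨂[k] _ : Fin n, A) :=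
  ⨆ (i : ℕ) (h : i + 2 ≤ n) (g : Fin n → A),
    Submodule.map (insertPair k A n i h g) (LinearMap.ker (LinearMap.mul' k A))

section

variable {k : Type u} [CommRing k] {A : Type u} [Ring A] [Algebra k A] {n : ℕ}

theorem nFoldMul_tprod (f : Fin n → A) : nFoldMul k A n (tprod k f) = (List.ofFn f).prod := by
  simp [nFoldMul]

theorem insertPair_tmul (i : ℕ) (h : i + 2 ≤ n) (g : Fin n → A) (x y : A) :
    insertPair k A n i h g (x ⊗ₜ y) =
      tprod k (update (update g ⟨i, by omega⟩ x) ⟨i + 1, by omega⟩ y) :=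
  rfl

theorem nFoldMul_comp_insertPair (i : ℕ) (h : i + 2 ≤ n) (g : Fin n → A) :
    nFoldMul k A n ∘ₗ insertPair k A n i h g =
      LinearMap.mulLeft k ((List.ofFn g).take i).prod ∘ₗ
        LinearMap.mulRight k ((List.ofFn g).drop (i + 2)).prod ∘ₗ LinearMap.mul' k A :=
  TensorProduct.ext' fun x y => by
    simp only [LinearMap.comp_apply, insertPair_tmul, nFoldMul_tprod]
    rw [List.prod_ofFn_update_update g i h]
    simp [mul_assoc]

theorem omegaSum_le_ker_nFoldMul : omegaSum k A n ≤ LinearMap.ker (nFoldMul k A n) :=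
  iSup_le fun i => iSup₂_le fun h g => Submodule.map_le_iff_le_comap.2 fun t ht => by
    rw [LinearMap.mem_ker] at ht
    rw [Submodule.mem_comap, LinearMap.mem_ker, ← LinearMap.comp_apply,
      nFoldMul_comp_insertPair]
    simp [ht]

theorem tprod_update_update_sub_mem_omegaSum (i : ℕ) (h : i + 2 ≤ n) (g : Fin n → A)
    {x y x' y' : A} (hxy : x * y = x' * y') :
    tprod k (update (update g ⟨i, by omega⟩ x) ⟨i + 1, by omega⟩ y) -
        tprod k (update (update g ⟨i, by omega⟩ x') ⟨i + 1, by omega⟩ y') ∈ omegaSum k A n := by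
  have hker : x ⊗ₜ[k] y - x' ⊗ₜ[k] y' ∈ LinearMap.ker (LinearMap.mul' k A) := by
    simp [hxy]
  have := Submodule.mem_map_of_mem (f := insertPair k A n i h g) hker
  rw [map_sub, insertPair_tmul, insertPair_tmul] at this
  exact Submodule.mem_iSup_of_mem i <| Submodule.mem_iSup_of_mem h <|
    Submodule.mem_iSup_of_mem g this

theorem tprod_sub_toLinearMap_prod_mem_omegaSum (d : ℕ) (hd : d < n) (f : Fin n → A)
    (hf : ∀ j : Fin n, d < j.1 → f j = 1) :
    tprod k f - MultilinearMap.toLinearMap (tprod k) 1 ⟨0, by omega⟩ (List.ofFn f).prod ∈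
      omegaSum k A n := by
  induction d generalizing f with
  | zero =>
    have hf₀ : f = update (1 : Fin n → A) ⟨0, hd⟩ (f ⟨0, hd⟩) :=
      eq_update_iff.2 ⟨rfl, fun j hj => hf j (Nat.pos_of_ne_zero (Fin.val_ne_of_ne hj))⟩
    rw [hf₀, List.prod_ofFn_update_one]
    simp
  | succ d ih =>
    set f' := update (update f ⟨d, by omega⟩ (f ⟨d, by omega⟩ * f ⟨d + 1, hd⟩)) ⟨d + 1, hd⟩ 1
    have hmerge : tprod k f - tprod k f' ∈ omegaSum k A n := by
      have := tprod_update_update_sub_mem_omegaSum (k := k) d hd f (x := f ⟨d, by omega⟩)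
        (y := f ⟨d + 1, hd⟩) (mul_one _).symm
      rwa [update_eq_self, update_eq_self] at this
    have hprod : (List.ofFn f').prod = (List.ofFn f).prod := by
      have := omegaSum_le_ker_nFoldMul hmerge
      rw [LinearMap.mem_ker, map_sub, sub_eq_zero, nFoldMul_tprod, nFoldMul_tprod] at this
      exact this.symm
    have hf' : ∀ j : Fin n, d < j.1 → f' j = 1 := by
      intro j hj
      rcases eq_or_ne j ⟨d + 1, hd⟩ with rfl | hj'
      · exact update_self ..
      · have hjd : j ≠ ⟨d, by omega⟩ := Fin.ne_of_val_ne hj.ne'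
        simp only [f', update_of_ne hj', update_of_ne hjd]
        exact hf j (lt_of_le_of_ne hj fun h => hj' (Fin.ext h.symm))
    have := Submodule.add_mem _ hmerge (ih (by omega) f' hf')
    rwa [hprod, sub_add_sub_cancel] at this

theorem ker_nFoldMul_le_omegaSum (hn : 0 < n) :
    LinearMap.ker (nFoldMul k A n) ≤ omegaSum k A n := by
  set ψ := MultilinearMap.toLinearMap (tprod k) (1 : Fin n → A) ⟨0, hn⟩
  have hψ : ∀ t, t - ψ (nFoldMul k A n t) ∈ omegaSum k A n := by
    intro t
    induction t using PiTensorProduct.induction_on with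
    | smul_tprod r f =>
      rw [map_smul, map_smul, ← smul_sub, nFoldMul_tprod]
      exact Submodule.smul_mem _ r <|
        tprod_sub_toLinearMap_prod_mem_omegaSum (n - 1) (by omega) f fun j hj => by omega
    | add a b ha hb =>
      simpa only [map_add, add_sub_add_comm] using Submodule.add_mem _ ha hb
  intro t ht
  simpa [LinearMap.mem_ker.1 ht] using hψ t

end

/-- For `n ≥ 2`, the kernel of the `n`-ary multiplication `μⁿ : A^{⊗n} → A` equals the sum,
over `i = 0, …, n − 2`, of the images in `A^{⊗n}` of the canonical maps
`A^{⊗i} ⊗ Ω₁(A) ⊗ A^{⊗(n−2−i)} → A^{⊗n}` induced by the inclusion `Ω₁(A) ⊆ A ⊗ A`. -/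
theorem ker_nFoldMul_eq_sum (k : Type u) [CommRing k] (A : Type u) [Ring A] [Algebra k A]
    (n : ℕ) (hn : 2 ≤ n) :
    LinearMap.ker (nFoldMul k A n) =
      ⨆ (i : ℕ) (h : i + 2 ≤ n) (g : Fin n → A),
        Submodule.map (insertPair k A n i h g) (LinearMap.ker (LinearMap.mul' k A)) :=
  le_antisymm (ker_nFoldMul_le_omegaSum (by omega)) omegaSum_le_ker_nFoldMul
end

section
/- Let k be a field of characteristic zero and A a unital associative k-algebra. If K₁ ∈ L^{k₁}(A) and K₂ ∈ L^{k₂}(A) are skew-symmetric polyderivations of A, then their Nijenhuis–Richardson bracket [K₁,K₂]^∧ = i_{K₁}K₂ − (−1)^{k₁k₂} i_{K₂}K₁ ∈ Λ^{k₁+k₂+1}(A;A) is again a skew-symmetric polyderivation, i.e. [K₁,K₂]^∧ ∈ L^{k₁+k₂}(A). -/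
open Equiv

/-- The insertion operator: for `K ∈ Λ^{k1}(A;A)` (with `k1 = k+1 ≥ 1`) and
`Φ ∈ Λ^p(A;A)` (with `p ≥ 1`), the map `i_K Φ ∈ Λ^n(A;A)` with `n = k1 + p − 1`, given by
`(i_K Φ)(a₁,…,aₙ) = (1/(k1! (p−1)!)) Σ_σ sign σ ·
Φ(K(a_{σ(1)},…,a_{σ(k1)}), a_{σ(k1+1)},…,a_{σ(n)})`, at the level of functions. -/
noncomputable def insertionFn (𝕜 : Type u) [Field 𝕜] (A : Type v) [Ring A] [Algebra 𝕜 A]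
    {k1 p n : ℕ} (h1 : 1 ≤ k1) (h2 : 1 ≤ p) (hn : n + 1 = k1 + p)
    (K : (Fin k1 → A) → A) (Φ : (Fin p → A) → A) : (Fin n → A) → A :=
  fun v =>
    ((k1.factorial * (p - 1).factorial : 𝕜))⁻¹ •
      ∑ σ : Equiv.Perm (Fin n), ((Equiv.Perm.sign σ : ℤˣ) : ℤ) •
        Φ (fun j : Fin p =>
          if _hj : (j : ℕ) = 0 then
            K (fun i : Fin k1 => v (σ ⟨(i : ℕ), by have := i.isLt; omega⟩))
          else v (σ ⟨k1 + (j : ℕ) - 1, by have := j.isLt; omega⟩))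

/-- Insertion of an element `a ∈ A = Λ^0(A;A)` into `Φ ∈ Λ^{q+1}(A;A)`:
`(i_a Φ)(a₁,…,a_q) = Φ(a, a₁,…,a_q)`. -/
def insertion0Fn {A : Type v} [Ring A] {q : ℕ} (a : A) (Φ : (Fin (q + 1) → A) → A) :
    (Fin q → A) → A :=
  fun v => Φ (Fin.cons a v)

/-- The wedge product of `φ ∈ Λ^p(A;A)` and `ψ ∈ Λ^q(A;A)`:
`(φ∧ψ)(a₁,…,a_{p+q}) = (1/(p! q!)) Σ_σ sign σ ·
φ(a_{σ(1)},…,a_{σ(p)}) · ψ(a_{σ(p+1)},…,a_{σ(p+q)})`, at the level of functions. -/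
noncomputable def wedgeFn (𝕜 : Type u) [Field 𝕜] (A : Type v) [Ring A] [Algebra 𝕜 A]
    {p q n : ℕ} (hn : n = p + q)
    (φ : (Fin p → A) → A) (ψ : (Fin q → A) → A) : (Fin n → A) → A :=
  fun v =>
    ((p.factorial * q.factorial : 𝕜))⁻¹ •
      ∑ σ : Equiv.Perm (Fin n), ((Equiv.Perm.sign σ : ℤˣ) : ℤ) •
        (φ (fun i : Fin p => v (σ ⟨(i : ℕ), by have := i.isLt; omega⟩)) *
          ψ (fun j : Fin q => v (σ ⟨p + (j : ℕ), by have := j.isLt; omega⟩)))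

/-- `F ∈ Λ^{m+1}(A;A)` is a skew-symmetric polyderivation: for all `a₁, …, a_m ∈ A`
the map `a ↦ F(a, a₁, …, a_m)` is a derivation of `A`. -/
def IsPolyDerivation {A : Type v} [Ring A] {m : ℕ} (F : (Fin (m + 1) → A) → A) : Prop :=
  ∀ (v : Fin m → A) (a b : A),
    F (Fin.cons (a * b) v) = F (Fin.cons a v) * b + a * F (Fin.cons b v)

/-- The Nijenhuis–Richardson bracket `[K,L]^∧ = i_K L − (−1)^{kl} i_L K` of
`K ∈ Λ^{k+1}(A;A)` and `L ∈ Λ^{l+1}(A;A)`, at the level of functions. -/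
noncomputable def nrBracketFn (𝕜 : Type u) [Field 𝕜] (A : Type v) [Ring A] [Algebra 𝕜 A]
    {k l : ℕ} (K : (Fin (k + 1) → A) → A) (L : (Fin (l + 1) → A) → A) :
    (Fin (k + l + 1) → A) → A :=
  insertionFn 𝕜 A (n := k + l + 1) (by omega) (by omega) (by omega) K L -
    ((-1 : ℤ) ^ (k * l)) •
      insertionFn 𝕜 A (n := k + l + 1) (by omega) (by omega) (by omega) L K

/-!
Put `a * b` into the first argument of `i_K L`. In each summand of the alternating sum the slot
holding `a * b` lies either among the arguments of `K`, where the derivation rule for `K` and then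
for `L` produces the two Leibniz terms plus the cross term `K(a,…)L(b,…) + L(a,…)K(b,…)`, or among
the remaining arguments of `L`, where the derivation rule for `L` produces just the Leibniz terms.
Summed over all permutations, the cross terms become `(k+1)` copies of one alternating sum
`S(K,L)`, so the defect of `i_K L` is `S(K,L) / (k! l!)`. A cyclic shift of the arguments gives
`S(L,K) = (-1)^(kl) S(K,L)`, hence the defects cancel in `i_K L - (-1)^(kl) i_L K`.
-/

open Function

namespace IsPolyDerivation

variable {R A : Type*} [Semiring R] [Ring A] [Module R A] {m : ℕ}

theorem map_update_mul {F : A [⋀^Fin (m + 1)]→ₗ[R] A} (hF : IsPolyDerivation ⇑F)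
    (w : Fin (m + 1) → A) (i : Fin (m + 1)) (x y : A) :
    F (update w i (x * y)) = F (update w i x) * y + x * F (update w i y) := by
  have update_zero : ∀ (u : Fin (m + 1) → A) (z : A), update u 0 z = Fin.cons z (Fin.tail u) :=
    fun u z => by rw [← Fin.update_cons_zero (u 0), Fin.cons_self_tail]
  rcases eq_or_ne i 0 with rfl | hi
  · simp only [update_zero]
    exact hF _ x y
  · have move_to_zero : ∀ z, F (update w i z) = -F (update (w ∘ swap 0 i) 0 z) := fun z => by
      have h := update_comp_equiv w (swap 0 i) i z
      rw [symm_swap, swap_apply_right] at h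
      rw [← h, F.map_swap _ hi.symm, neg_neg]
    simp only [move_to_zero, update_zero, hF _ x y, neg_add, mul_neg, neg_mul]

end IsPolyDerivation

section Slots

variable {N p q : ℕ}

def leftSlot (h : N = p + q) (i : Fin p) : Fin N := Fin.cast h.symm (Fin.castAdd q i)

def rightSlot (h : N = p + q) (j : Fin q) : Fin N := Fin.cast h.symm (Fin.natAdd p j)

@[simp] theorem leftSlot_val (h : N = p + q) (i : Fin p) : (leftSlot h i : ℕ) = i := rfl

@[simp] theorem rightSlot_val (h : N = p + q) (j : Fin q) : (rightSlot h j : ℕ) = p + j := rfl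

theorem leftSlot_injective (h : N = p + q) : Injective (leftSlot h) := fun i i' hii' => by
  simpa [Fin.ext_iff] using hii'

theorem rightSlot_injective (h : N = p + q) : Injective (rightSlot h) := fun j j' hjj' => by
  simpa [Fin.ext_iff] using hjj'

theorem leftSlot_ne_rightSlot (h : N = p + q) (i : Fin p) (j : Fin q) :
    leftSlot h i ≠ rightSlot h j := by
  simp only [ne_eq, Fin.ext_iff, leftSlot_val, rightSlot_val]
  omega

theorem leftSlot_or_rightSlot (h : N = p + q) (P : Fin N) :
    (∃ i, leftSlot h i = P) ∨ ∃ j, rightSlot h j = P := by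
  subst h
  induction P using Fin.addCases with
  | left i => exact .inl ⟨i, rfl⟩
  | right j => exact .inr ⟨j, rfl⟩

theorem sum_leftSlot_add_sum_rightSlot {M : Type*} [AddCommMonoid M] (h : N = p + q)
    (g : Fin N → M) : ∑ i, g (leftSlot h i) + ∑ j, g (rightSlot h j) = ∑ P, g P := by
  subst h
  exact (Fin.sum_univ_add g).symm

variable {k m : ℕ} {A : Type*}

theorem cons_comp_leftSlot (h : m + 1 = (k + 1) + q) (h' : m = k + q) (z : A) (u : Fin m → A) :
    Fin.cons z u ∘ leftSlot h = Fin.cons z (u ∘ leftSlot h') := by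
  funext i
  induction i using Fin.cases <;> rfl

theorem cons_comp_rightSlot (h : m + 1 = (k + 1) + q) (h' : m = k + q) (z : A) (u : Fin m → A) :
    Fin.cons z u ∘ rightSlot h = u ∘ rightSlot h' := by
  funext j
  have : rightSlot h j = (rightSlot h' j).succ := Fin.ext (by simp only [rightSlot_val, Fin.val_succ]; omega)
  simp [this]

end Slots

section SignedSplitSum

variable {A M : Type*} [AddCommGroup M] {N p q : ℕ}

def signedSplitSum (h : N = p + q) (f : (Fin p → A) → (Fin q → A) → M) (v : Fin N → A) : M :=
  ∑ ρ : Perm (Fin N), (Perm.sign ρ : ℤ) • f (v ∘ ρ ∘ leftSlot h) (v ∘ ρ ∘ rightSlot h)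

theorem finRotate_pow_apply_val (t : ℕ) (x : Fin N) :
    ((finRotate N ^ t) x : ℕ) = (x + t) % N := by
  rcases N with _ | N
  · exact x.elim0
  induction t with
  | zero => simp [Nat.mod_eq_of_lt x.isLt]
  | succ t ih =>
    rw [pow_succ', Perm.mul_apply, finRotate_apply, Fin.val_add, ih, Fin.val_one', Nat.add_mod_mod,
      Nat.mod_add_mod, add_assoc]

theorem sign_finRotate_pow (h : N = p + q) : Perm.sign (finRotate N ^ p) = (-1) ^ (p * q) := by
  rw [map_pow, sign_finRotate, ← pow_mul, Int.units_pow_eq_pow_mod_two,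
    Int.units_pow_eq_pow_mod_two _ (p * q)]
  congr 1
  subst h
  rcases p with _ | p
  · simp
  rw [show p + 1 + q - 1 = p + q by omega, add_mul, Nat.add_mod,
    Nat.even_iff.mp (Nat.even_mul_succ_self p), zero_add, Nat.mod_mod, mul_comm]

theorem signedSplitSum_flip (hpq : N = p + q) (hqp : N = q + p)
    (f : (Fin p → A) → (Fin q → A) → M) (v : Fin N → A) :
    signedSplitSum hqp (fun y x => f x y) v = (-1 : ℤ) ^ (p * q) • signedSplitSum hpq f v := by
  set r := finRotate N ^ p
  have r_left : r ∘ leftSlot hqp = rightSlot hpq := funext fun j => Fin.ext <| by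
    simp only [comp_apply, r, finRotate_pow_apply_val, leftSlot_val, rightSlot_val]
    rw [Nat.mod_eq_of_lt (by omega), add_comm]
  have r_right : r ∘ rightSlot hqp = leftSlot hpq := funext fun i => Fin.ext <| by
    simp only [comp_apply, r, finRotate_pow_apply_val, leftSlot_val, rightSlot_val]
    rw [show q + i + p = i + N by omega, Nat.add_mod_right, Nat.mod_eq_of_lt (by omega)]
  rw [signedSplitSum, ← Equiv.sum_comp (Equiv.mulRight r), signedSplitSum, Finset.smul_sum]
  refine Finset.sum_congr rfl fun ρ _ => ?_
  simp only [coe_mulRight, Perm.coe_mul, comp_assoc, r_left, r_right, map_mul, Units.val_mul,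
    mul_smul, r, sign_finRotate_pow hpq]
  push_cast
  exact smul_comm _ _ _

end SignedSplitSum

section PermDecomposition

variable {m : ℕ}

theorem decomposeFin_symm_mul_decomposeFin_symm_zero (P : Fin (m + 1)) (τ : Perm (Fin m)) :
    Perm.decomposeFin.symm (P, τ⁻¹) * Perm.decomposeFin.symm (0, τ) = swap 0 P := by
  ext y
  induction y using Fin.cases <;> simp

/-- `decomposeFin.symm (0, τ)` fixes `0` and acts as `τ` on the other points, so in
`w ∘ ⇑(decomposeFin.symm (0, τ) * swap 0 P)` the entry `w 0` sits at position `P`. -/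
theorem sum_perm_eq_sum_sum_mul_swap {M : Type*} [AddCommMonoid M]
    (F : Perm (Fin (m + 1)) → M) :
    ∑ ρ, F ρ = ∑ P, ∑ τ : Perm (Fin m), F (Perm.decomposeFin.symm (0, τ) * swap 0 P) := by
  rw [← Equiv.sum_comp (Equiv.inv _), ← Equiv.sum_comp Perm.decomposeFin.symm,
    Fintype.sum_prod_type]
  refine Finset.sum_congr rfl fun P _ => ?_
  rw [← Equiv.sum_comp (Equiv.inv _)]
  refine Finset.sum_congr rfl fun τ _ => congrArg F ?_
  rw [Equiv.inv_apply, inv_eq_iff_eq_inv, mul_inv_rev, swap_inv]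
  exact eq_mul_inv_of_mul_eq (decomposeFin_symm_mul_decomposeFin_symm_zero P τ)

theorem cons_comp_decomposeFin_symm_zero {A : Type*} (z : A) (v : Fin m → A)
    (τ : Perm (Fin m)) :
    Fin.cons z v ∘ Perm.decomposeFin.symm (0, τ) = Fin.cons z (v ∘ τ) := by
  funext y
  induction y using Fin.cases <;> simp

end PermDecomposition

section InsertionTerms

variable {A : Type*} [Ring A] {k l N : ℕ}

def insertFirst (K : (Fin (k + 1) → A) → A) (L : (Fin (l + 1) → A) → A)
    (x : Fin (k + 1) → A) (y : Fin l → A) : A :=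
  L (Fin.cons (K x) y)

def crossTerm (K : (Fin (k + 1) → A) → A) (L : (Fin (l + 1) → A) → A) (a b : A)
    (x : Fin k → A) (y : Fin l → A) : A :=
  K (Fin.cons a x) * L (Fin.cons b y) + L (Fin.cons a y) * K (Fin.cons b x)

theorem crossTerm_swap (K : (Fin (k + 1) → A) → A) (L : (Fin (l + 1) → A) → A)
    (a b : A) (x : Fin k → A) (y : Fin l → A) : crossTerm L K a b y x = crossTerm K L a b x y :=
  add_comm _ _

/-- `w z` is the argument list with `z` in the distinguished slot. Reading the arguments of `L`
off `w 0` makes the defect vanish by itself when that slot is not an argument of `K`. -/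
def insertionDefect (K : (Fin (k + 1) → A) → A) (L : (Fin (l + 1) → A) → A)
    (h : N = (k + 1) + l) (a b : A) (w : A → Fin N → A) : A :=
  K (w a ∘ leftSlot h) * L (Fin.cons b (w 0 ∘ rightSlot h))
    + L (Fin.cons a (w 0 ∘ rightSlot h)) * K (w b ∘ leftSlot h)

end InsertionTerms

section InsertionLeibniz

variable {R A : Type*} [Semiring R] [Ring A] [Module R A] {k l m N : ℕ}
  {K : A [⋀^Fin (k + 1)]→ₗ[R] A} {L : A [⋀^Fin (l + 1)]→ₗ[R] A}

theorem insertFirst_update_left_mul (hK : IsPolyDerivation ⇑K) (hL : IsPolyDerivation ⇑L)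
    (x : Fin (k + 1) → A) (i : Fin (k + 1)) (y : Fin l → A) (a b : A) :
    insertFirst ⇑K ⇑L (update x i (a * b)) y
      = insertFirst ⇑K ⇑L (update x i a) y * b + a * insertFirst ⇑K ⇑L (update x i b) y
        + (K (update x i a) * L (Fin.cons b y) + L (Fin.cons a y) * K (update x i b)) := by
  have cons_add : ∀ c d : A, L (Fin.cons (c + d) y) = L (Fin.cons c y) + L (Fin.cons d y) :=
    L.toMultilinearMap.cons_add y
  simp only [insertFirst, hK.map_update_mul, cons_add, hL y]
  abel

theorem insertFirst_update_right_mul {F : (Fin (k + 1) → A) → A} (hL : IsPolyDerivation ⇑L)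
    (x : Fin (k + 1) → A) (y : Fin l → A) (j : Fin l) (a b : A) :
    insertFirst F ⇑L x (update y j (a * b))
      = insertFirst F ⇑L x (update y j a) * b + a * insertFirst F ⇑L x (update y j b) := by
  simp only [insertFirst, Fin.cons_update, hL.map_update_mul]

theorem insertFirst_update_mul (hK : IsPolyDerivation ⇑K) (hL : IsPolyDerivation ⇑L)
    (h : N = (k + 1) + l) (U : Fin N → A) (P : Fin N) (hP : U P = 0) (a b : A) :
    insertFirst ⇑K ⇑L (update U P (a * b) ∘ leftSlot h) (update U P (a * b) ∘ rightSlot h)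
      = insertFirst ⇑K ⇑L (update U P a ∘ leftSlot h) (update U P a ∘ rightSlot h) * b
        + a * insertFirst ⇑K ⇑L (update U P b ∘ leftSlot h) (update U P b ∘ rightSlot h)
        + insertionDefect ⇑K ⇑L h a b (update U P) := by
  have hU : update U P 0 = U := update_eq_self_iff.mpr hP.symm
  rw [insertionDefect, hU]
  obtain ⟨i, rfl⟩ | ⟨j, rfl⟩ := leftSlot_or_rightSlot h P
  · have on_left : ∀ z, update U (leftSlot h i) z ∘ leftSlot h = update (U ∘ leftSlot h) i z :=
      fun z => update_comp_eq_of_injective _ (leftSlot_injective h) _ _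
    have on_right : ∀ z, update U (leftSlot h i) z ∘ rightSlot h = U ∘ rightSlot h :=
      fun z => update_comp_eq_of_forall_ne _ _ fun j => (leftSlot_ne_rightSlot h i j).symm
    simp only [on_left, on_right]
    exact insertFirst_update_left_mul hK hL _ i _ a b
  · have on_left : ∀ z, update U (rightSlot h j) z ∘ leftSlot h = U ∘ leftSlot h :=
      fun z => update_comp_eq_of_forall_ne _ _ fun i => leftSlot_ne_rightSlot h i j
    have on_right : ∀ z,
        update U (rightSlot h j) z ∘ rightSlot h = update (U ∘ rightSlot h) j z :=
      fun z => update_comp_eq_of_injective _ (rightSlot_injective h) _ _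
    have vanish : ∀ c, L (Fin.cons c (U ∘ rightSlot h)) = 0 := fun c =>
      L.map_coord_zero j.succ (by simpa using hP)
    simp only [on_left, on_right, vanish, mul_zero, zero_mul, add_zero]
    exact insertFirst_update_right_mul hL _ _ j a b

theorem sign_smul_insertionDefect_leftSlot {G : (Fin (l + 1) → A) → A} (h : m + 1 = (k + 1) + l)
    (hm : m = k + l) (a b : A) (v : Fin m → A) (τ : Perm (Fin m)) (i : Fin (k + 1)) :
    (Perm.sign (Perm.decomposeFin.symm (0, τ) * swap 0 (leftSlot h i)) : ℤ) •
        insertionDefect ⇑K G h a b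
          (fun z => Fin.cons z v ∘ ⇑(Perm.decomposeFin.symm (0, τ) * swap 0 (leftSlot h i)))
      = (Perm.sign τ : ℤ) • crossTerm ⇑K G a b (v ∘ τ ∘ leftSlot hm) (v ∘ τ ∘ rightSlot hm) := by
  have leftSlot_zero : leftSlot h 0 = 0 := rfl
  have args : ∀ z, Fin.cons z v ∘ ⇑(Perm.decomposeFin.symm (0, τ) * swap 0 (leftSlot h i))
      = Fin.cons z (v ∘ τ) ∘ swap 0 (leftSlot h i) := fun z => by
    rw [Perm.coe_mul, ← comp_assoc, cons_comp_decomposeFin_symm_zero]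
  have on_left : ∀ z, (Fin.cons z (v ∘ τ) ∘ swap 0 (leftSlot h i)) ∘ leftSlot h
      = Fin.cons z (v ∘ τ ∘ leftSlot hm) ∘ swap 0 i := fun z => by
    rw [comp_assoc, ← leftSlot_zero, (leftSlot_injective h).swap_comp, ← comp_assoc,
      cons_comp_leftSlot h hm]
    rfl
  have on_right : ∀ z, (Fin.cons z (v ∘ τ) ∘ swap 0 (leftSlot h i)) ∘ rightSlot h
      = v ∘ τ ∘ rightSlot hm := fun z => funext fun j => by
    have hj := congrFun (cons_comp_rightSlot h hm z (v ∘ τ)) j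
    simp only [comp_apply] at hj ⊢
    rw [swap_apply_of_ne_of_ne (leftSlot_zero ▸ leftSlot_ne_rightSlot h 0 j).symm
      (leftSlot_ne_rightSlot h i j).symm, hj]
  have sign_swap_eq : Perm.sign (swap 0 (leftSlot h i)) = Perm.sign (swap 0 i) := by
    simp only [← leftSlot_zero, Perm.sign_swap', (leftSlot_injective h).eq_iff]
  simp only [insertionDefect, args, on_left, on_right, K.map_perm]
  rw [map_mul, Perm.decomposeFin.symm_sign, sign_swap_eq]
  rcases Int.units_eq_one_or (Perm.sign (swap 0 i)) with hs | hs <;> simp [hs, crossTerm]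

theorem insertionDefect_rightSlot {F : (Fin (k + 1) → A) → A} (h : m + 1 = (k + 1) + l)
    (a b : A) (v : Fin m → A) (τ : Perm (Fin m)) (j : Fin l) :
    insertionDefect F ⇑L h a b
      (fun z => Fin.cons z v ∘ ⇑(Perm.decomposeFin.symm (0, τ) * swap 0 (rightSlot h j))) = 0 := by
  have vanish : ∀ c, L (Fin.cons c ((Fin.cons 0 v ∘
      ⇑(Perm.decomposeFin.symm (0, τ) * swap 0 (rightSlot h j))) ∘ rightSlot h)) = 0 :=
    fun c => L.map_coord_zero j.succ (by simp)
  simp only [insertionDefect, vanish, mul_zero, zero_mul, add_zero]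

theorem sum_sign_smul_insertionDefect (h : m + 1 = (k + 1) + l) (hm : m = k + l) (a b : A)
    (v : Fin m → A) :
    ∑ ρ : Perm (Fin (m + 1)),
        (Perm.sign ρ : ℤ) • insertionDefect ⇑K ⇑L h a b (fun z => Fin.cons z v ∘ ρ)
      = (k + 1) • signedSplitSum hm (crossTerm ⇑K ⇑L a b) v := by
  rw [sum_perm_eq_sum_sum_mul_swap, ← sum_leftSlot_add_sum_rightSlot h]
  simp only [sign_smul_insertionDefect_leftSlot h hm, insertionDefect_rightSlot, smul_zero,
    Finset.sum_const_zero, add_zero, Finset.sum_const, Finset.card_univ, Fintype.card_fin]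
  rfl

theorem signedSplitSum_insertFirst_cons_mul (hK : IsPolyDerivation ⇑K)
    (hL : IsPolyDerivation ⇑L) (h : m + 1 = (k + 1) + l) (hm : m = k + l) (v : Fin m → A)
    (a b : A) :
    signedSplitSum h (insertFirst ⇑K ⇑L) (Fin.cons (a * b) v)
      = signedSplitSum h (insertFirst ⇑K ⇑L) (Fin.cons a v) * b
        + a * signedSplitSum h (insertFirst ⇑K ⇑L) (Fin.cons b v)
        + (k + 1) • signedSplitSum hm (crossTerm ⇑K ⇑L a b) v := by
  have summand : ∀ ρ : Perm (Fin (m + 1)),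
      insertFirst ⇑K ⇑L (Fin.cons (a * b) v ∘ ρ ∘ leftSlot h)
          (Fin.cons (a * b) v ∘ ρ ∘ rightSlot h)
        = insertFirst ⇑K ⇑L (Fin.cons a v ∘ ρ ∘ leftSlot h) (Fin.cons a v ∘ ρ ∘ rightSlot h) * b
          + a * insertFirst ⇑K ⇑L (Fin.cons b v ∘ ρ ∘ leftSlot h)
              (Fin.cons b v ∘ ρ ∘ rightSlot h)
          + insertionDefect ⇑K ⇑L h a b (fun z => Fin.cons z v ∘ ρ) := fun ρ => by
    have hw : (fun z => Fin.cons z v ∘ ⇑ρ) = update (Fin.cons 0 v ∘ ⇑ρ) (ρ.symm 0) := by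
      funext z
      rw [← update_comp_equiv, Fin.update_cons_zero]
    have key := insertFirst_update_mul hK hL h (Fin.cons 0 v ∘ ⇑ρ) (ρ.symm 0) (by simp) a b
    rw [← hw] at key
    exact key
  rw [← sum_sign_smul_insertionDefect h hm, signedSplitSum, signedSplitSum, signedSplitSum,
    Finset.sum_mul, Finset.mul_sum, ← Finset.sum_add_distrib, ← Finset.sum_add_distrib]
  refine Finset.sum_congr rfl fun ρ _ => ?_
  rw [summand, smul_add, smul_add, smul_mul_assoc, mul_smul_comm]

end InsertionLeibniz

section InsertionFn

variable {𝕜 A : Type*} [Field 𝕜] [Ring A] [Algebra 𝕜 A] {k l n : ℕ}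

theorem insertionFn_eq_smul_signedSplitSum (h1 : 1 ≤ k + 1) (h2 : 1 ≤ l + 1)
    (hn : n + 1 = (k + 1) + (l + 1)) (K : (Fin (k + 1) → A) → A) (L : (Fin (l + 1) → A) → A)
    (w : Fin n → A) :
    insertionFn 𝕜 A h1 h2 hn K L w
      = (((k + 1).factorial * l.factorial : ℕ) : 𝕜)⁻¹ •
          signedSplitSum (by omega : n = (k + 1) + l) (insertFirst K L) w := by
  rw [insertionFn, signedSplitSum, Nat.add_sub_cancel, Nat.cast_mul]
  congr 1
  refine Finset.sum_congr rfl fun σ _ => congrArg _ (congrArg L ?_)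
  funext j
  induction j using Fin.cases with
  | zero => rfl
  | succ j =>
    simp only [Fin.val_succ, Nat.add_one_ne_zero, dite_false, Fin.cons_succ, comp_apply]
    congr 2

variable {R : Type*} [Semiring R] [Module R A] {K : A [⋀^Fin (k + 1)]→ₗ[R] A}
  {L : A [⋀^Fin (l + 1)]→ₗ[R] A}

theorem insertionFn_cons_mul [CharZero 𝕜] (hK : IsPolyDerivation ⇑K) (hL : IsPolyDerivation ⇑L)
    {m : ℕ} (h1 : 1 ≤ k + 1) (h2 : 1 ≤ l + 1) (hm : m + 1 + 1 = (k + 1) + (l + 1))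
    (v : Fin m → A) (a b : A) :
    insertionFn 𝕜 A h1 h2 hm ⇑K ⇑L (Fin.cons (a * b) v)
      = insertionFn 𝕜 A h1 h2 hm ⇑K ⇑L (Fin.cons a v) * b
        + a * insertionFn 𝕜 A h1 h2 hm ⇑K ⇑L (Fin.cons b v)
        + ((k.factorial * l.factorial : ℕ) : 𝕜)⁻¹ •
            signedSplitSum (by omega : m = k + l) (crossTerm ⇑K ⇑L a b) v := by
  simp only [insertionFn_eq_smul_signedSplitSum,
    signedSplitSum_insertFirst_cons_mul hK hL _ (by omega : m = k + l), smul_add, smul_mul_assoc,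
    mul_smul_comm, ← Nat.cast_smul_eq_nsmul 𝕜, smul_smul]
  congr 2
  rw [Nat.factorial_succ]
  push_cast
  field_simp

end InsertionFn

/-- If `K₁ ∈ L^{k₁}(A)` and `K₂ ∈ L^{k₂}(A)` are skew-symmetric polyderivations of `A`
(over a field of characteristic zero), then their Nijenhuis–Richardson bracket
`[K₁,K₂]^∧ ∈ Λ^{k₁+k₂+1}(A;A)` is again a skew-symmetric polyderivation:
`[K₁,K₂]^∧ ∈ L^{k₁+k₂}(A)`. -/
theorem nrBracket_isPolyDerivation (𝕜 : Type u) [Field 𝕜] [CharZero 𝕜]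
    (A : Type v) [Ring A] [Algebra 𝕜 A] (k₁ k₂ : ℕ)
    (K₁ : A [⋀^Fin (k₁ + 1)]→ₗ[𝕜] A) (K₂ : A [⋀^Fin (k₂ + 1)]→ₗ[𝕜] A)
    (h₁ : IsPolyDerivation ⇑K₁) (h₂ : IsPolyDerivation ⇑K₂) :
    IsPolyDerivation (nrBracketFn 𝕜 A ⇑K₁ ⇑K₂) := by
  intro v a b
  have defect_flip : signedSplitSum (Nat.add_comm k₁ k₂) (crossTerm ⇑K₂ ⇑K₁ a b) v
      = (-1 : ℤ) ^ (k₁ * k₂) • signedSplitSum rfl (crossTerm ⇑K₁ ⇑K₂ a b) v := by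
    rw [← signedSplitSum_flip rfl (Nat.add_comm k₁ k₂)]
    congr 1
    funext y x
    exact crossTerm_swap _ _ a b x y
  have sign_sq : ∀ x : A, (-1 : ℤ) ^ (k₁ * k₂) • (-1 : ℤ) ^ (k₁ * k₂) • x = x := fun x => by
    rw [smul_smul, ← mul_pow, neg_one_mul, neg_neg, one_pow, one_smul]
  simp only [nrBracketFn, Pi.sub_apply, Pi.smul_apply, insertionFn_cons_mul h₁ h₂,
    insertionFn_cons_mul h₂ h₁, defect_flip, smul_add, smul_comm ((-1 : ℤ) ^ (k₁ * k₂)) (_ : 𝕜),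
    sign_sq, Nat.mul_comm k₂.factorial, sub_mul, mul_sub, smul_mul_assoc, mul_smul_comm]
  abel
end

section
/- Let k be a field of characteristic zero and A a unital associative k-algebra. Let a ∈ A = Λ^0(A;A), K ∈ Λ^{k+1}(A;A), and let L ∈ L^ℓ(A) be a skew-symmetric polyderivation. Then i_{K∧a}L = (i_K L) ∧ a + K ∧ (i_a L), where K ∧ a is the alternating map (K∧a)(a₁,…,a_{k+1}) = K(a₁,…,a_{k+1})·a. -/
open Equiv

/-- For `a ∈ A = Λ^0(A;A)`, `K ∈ Λ^{k+1}(A;A)` and a skew-symmetric polyderivation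
`L ∈ L^ℓ(A)` one has `i_{K∧a} L = (i_K L) ∧ a + K ∧ (i_a L)`, where
`(K∧a)(a₁,…) = K(a₁,…)·a`. -/
theorem insertion_wedge_right (𝕜 : Type u) [Field 𝕜] [CharZero 𝕜]
    (A : Type v) [Ring A] [Algebra 𝕜 A] (k l : ℕ) (a : A)
    (K : A [⋀^Fin (k + 1)]→ₗ[𝕜] A) (L : A [⋀^Fin (l + 1)]→ₗ[𝕜] A)
    (hL : IsPolyDerivation ⇑L) :
    insertionFn 𝕜 A (n := k + l + 1) (by omega) (by omega) (by omega)
        (fun w => K w * a) ⇑L =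
      (fun v => insertionFn 𝕜 A (n := k + l + 1) (by omega) (by omega) (by omega)
          (⇑K) (⇑L) v * a) +
        wedgeFn 𝕜 A (n := k + l + 1) (by omega) (⇑K) (insertion0Fn a ⇑L) := by
  funext v
  have key : ∀ (σ : Equiv.Perm (Fin (k + l + 1))) (x : A),
      (fun j : Fin (l + 1) =>
        if _hj : (j : ℕ) = 0 then x
        else v (σ ⟨k + 1 + (j : ℕ) - 1, by have := j.isLt; omega⟩)) =
      Fin.cons x (fun i : Fin l => v (σ ⟨k + 1 + (i : ℕ), by have := i.isLt; omega⟩)) := by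
    intro σ x
    funext j
    refine Fin.cases ?_ (fun i => ?_) j
    · simp
    · have hji : ((i.succ : Fin (l + 1)) : ℕ) = (i : ℕ) + 1 := rfl
      rw [dif_neg (by omega), Fin.cons_succ]
      exact congrArg v (congrArg σ (Fin.ext (by simp only [Fin.val_succ]; omega)))
  simp only [insertionFn, wedgeFn, insertion0Fn, Pi.add_apply, Nat.add_sub_cancel]
  have hsum : ∀ σ : Equiv.Perm (Fin (k + l + 1)),
      ((Equiv.Perm.sign σ : ℤˣ) : ℤ) • (L fun j : Fin (l + 1) =>
        if _hj : (j : ℕ) = 0 then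
          (K fun i : Fin (k + 1) => v (σ ⟨(i : ℕ), by have := i.isLt; omega⟩)) * a
        else v (σ ⟨k + 1 + (j : ℕ) - 1, by have := j.isLt; omega⟩)) =
      ((Equiv.Perm.sign σ : ℤˣ) : ℤ) • ((L fun j : Fin (l + 1) =>
        if _hj : (j : ℕ) = 0 then
          K fun i : Fin (k + 1) => v (σ ⟨(i : ℕ), by have := i.isLt; omega⟩)
        else v (σ ⟨k + 1 + (j : ℕ) - 1, by have := j.isLt; omega⟩)) * a) +
      ((Equiv.Perm.sign σ : ℤˣ) : ℤ) •
        ((K fun i : Fin (k + 1) => v (σ ⟨(i : ℕ), by have := i.isLt; omega⟩)) *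
          L (Fin.cons a fun j : Fin l => v (σ ⟨k + 1 + (j : ℕ), by have := j.isLt; omega⟩))) := by
    intro σ
    rw [key σ ((K fun i : Fin (k + 1) => v (σ ⟨(i : ℕ), by have := i.isLt; omega⟩)) * a),
      key σ (K fun i : Fin (k + 1) => v (σ ⟨(i : ℕ), by have := i.isLt; omega⟩)),
      hL, smul_add]
  rw [Finset.sum_congr rfl (fun σ _ => hsum σ)]
  simp only [smul_add, Finset.sum_add_distrib, smul_mul_assoc, Finset.sum_mul]
end

section
/- Let k be a field of characteristic zero and A a unital associative k-algebra. Let a ∈ A = Λ^0(A;A), K ∈ Λ^{k+1}(A;A), and let L ∈ L^ℓ(A) be a skew-symmetric polyderivation. Then i_{a∧K}L = a ∧ (i_K L) + (−1)^{(k+1)ℓ} (i_a L) ∧ K, where a ∧ K is the alternating map (a∧K)(a₁,…,a_{k+1}) = a·K(a₁,…,a_{k+1}). -/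
open Equiv

theorem rot_val (N m : ℕ) (i : Fin (N+1)) :
    (((finRotate (N+1))^m) i).val = (i.val + m) % (N+1) := by
  induction m with
  | zero => simp [Nat.mod_eq_of_lt i.isLt]
  | succ m ih =>
    rw [pow_succ', Equiv.Perm.mul_apply, finRotate_succ_apply, Fin.add_def, ih, Fin.val_one']
    show ((↑i + m) % (N + 1) + 1 % (N + 1)) % (N + 1) = (↑i + (m + 1)) % (N + 1)
    rw [Nat.add_mod_mod, Nat.mod_add_mod, Nat.add_assoc]

/-- For `a ∈ A = Λ^0(A;A)`, `K ∈ Λ^{k+1}(A;A)` and a skew-symmetric polyderivation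
`L ∈ L^ℓ(A)` one has `i_{a∧K} L = a ∧ (i_K L) + (−1)^{(k+1)ℓ} (i_a L) ∧ K`, where
`(a∧K)(a₁,…) = a·K(a₁,…)`. -/
theorem insertion_wedge_left (𝕜 : Type u) [Field 𝕜] [CharZero 𝕜]
    (A : Type v) [Ring A] [Algebra 𝕜 A] (k l : ℕ) (a : A)
    (K : A [⋀^Fin (k + 1)]→ₗ[𝕜] A) (L : A [⋀^Fin (l + 1)]→ₗ[𝕜] A)
    (hL : IsPolyDerivation ⇑L) :
    insertionFn 𝕜 A (n := k + l + 1) (by omega) (by omega) (by omega)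
        (fun w => a * K w) ⇑L =
      (fun v => a * insertionFn 𝕜 A (n := k + l + 1) (by omega) (by omega) (by omega)
          (⇑K) (⇑L) v) +
        ((-1 : ℤ) ^ ((k + 1) * l)) •
          wedgeFn 𝕜 A (n := k + l + 1) (by omega) (insertion0Fn a ⇑L) (⇑K) := by
  funext v
  simp only [insertionFn, wedgeFn, insertion0Fn, Pi.add_apply, Pi.smul_apply, Nat.add_sub_cancel]
  -- rewrite the dite function as a Fin.cons
  have hdite : ∀ (σ : Equiv.Perm (Fin (k + l + 1))) (x : A),
      (fun j : Fin (l+1) => if _hj : (j : ℕ) = 0 then x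
        else v (σ ⟨k + 1 + (j : ℕ) - 1, by have := j.isLt; omega⟩))
      = Fin.cons x (fun i : Fin l => v (σ ⟨k + 1 + (i : ℕ), by have := i.isLt; omega⟩)) := by
    intro σ x
    funext j
    induction j using Fin.cases with
    | zero => simp
    | succ i =>
      have h0 : ((i.succ : Fin (l+1)) : ℕ) ≠ 0 := by simp
      rw [dif_neg h0, Fin.cons_succ]
      congr 1
  have hS : (∑ σ : Equiv.Perm (Fin (k + l + 1)), ((Equiv.Perm.sign σ : ℤˣ) : ℤ) •
        L (fun j : Fin (l+1) => if _hj : (j : ℕ) = 0 then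
            a * K (fun i : Fin (k+1) => v (σ ⟨(i : ℕ), by have := i.isLt; omega⟩))
          else v (σ ⟨k + 1 + (j : ℕ) - 1, by have := j.isLt; omega⟩)))
      = ∑ σ : Equiv.Perm (Fin (k + l + 1)), ((Equiv.Perm.sign σ : ℤˣ) : ℤ) •
        (L (Fin.cons a (fun i : Fin l => v (σ ⟨k + 1 + (i : ℕ), by have := i.isLt; omega⟩))) *
            K (fun i : Fin (k+1) => v (σ ⟨(i : ℕ), by have := i.isLt; omega⟩)) +
          a * L (Fin.cons (K (fun i : Fin (k+1) => v (σ ⟨(i : ℕ), by have := i.isLt; omega⟩)))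
            (fun i : Fin l => v (σ ⟨k + 1 + (i : ℕ), by have := i.isLt; omega⟩)))) := by
    refine Finset.sum_congr rfl fun σ _ => ?_
    rw [DFunLike.congr_arg L (hdite σ (a * K fun i : Fin (k+1) =>
      v (σ ⟨(i : ℕ), by have := i.isLt; omega⟩))), hL]
  have hT : (∑ σ : Equiv.Perm (Fin (k + l + 1)), ((Equiv.Perm.sign σ : ℤˣ) : ℤ) •
        L (fun j : Fin (l+1) => if _hj : (j : ℕ) = 0 then
            K (fun i : Fin (k+1) => v (σ ⟨(i : ℕ), by have := i.isLt; omega⟩))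
          else v (σ ⟨k + 1 + (j : ℕ) - 1, by have := j.isLt; omega⟩)))
      = ∑ σ : Equiv.Perm (Fin (k + l + 1)), ((Equiv.Perm.sign σ : ℤˣ) : ℤ) •
        L (Fin.cons (K (fun i : Fin (k+1) => v (σ ⟨(i : ℕ), by have := i.isLt; omega⟩)))
            (fun i : Fin l => v (σ ⟨k + 1 + (i : ℕ), by have := i.isLt; omega⟩))) := by
    refine Finset.sum_congr rfl fun σ _ => ?_
    rw [DFunLike.congr_arg L (hdite σ (K fun i : Fin (k+1) =>
      v (σ ⟨(i : ℕ), by have := i.isLt; omega⟩)))]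
  rw [hS, hT]
  simp only [smul_add, Finset.sum_add_distrib]
  rw [add_comm]
  congr 1
  · -- a * (c⁻¹ • T1) part
    rw [mul_smul_comm, Finset.mul_sum]
    simp only [mul_smul_comm]
  · -- wedge part
    rw [show ((l.factorial : 𝕜) * (k+1).factorial)⁻¹ = (((k+1).factorial : 𝕜) * l.factorial)⁻¹ by
      rw [mul_comm]]
    rw [smul_comm]
    congr 1
    rw [Finset.smul_sum]
    set ρ : Equiv.Perm (Fin (k + l + 1)) := (finRotate (k + l + 1))^(k+1) with hρ
    have hsgnρ : ((Equiv.Perm.sign ρ : ℤˣ) : ℤ) = ((-1 : ℤ)^(k+l))^(k+1) := by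
      rw [hρ, map_pow, sign_finRotate]
      push_cast
      ring
    have heven : ((-1 : ℤ)^((k+1)*l)) * ((-1 : ℤ)^(k+l))^(k+1) = 1 := by
      rw [← pow_mul, ← pow_add]
      apply Even.neg_one_pow
      have : (k+1)*l + (k+l)*(k+1) = (k+1)*(k+2*l) := by ring
      rw [this]
      rcases Nat.even_or_odd k with h | h
      · exact (h.add (even_two_mul l)).mul_left _
      · exact Even.mul_right h.add_one _
    apply Fintype.sum_equiv (Equiv.mulRight ρ)
    intro σ
    have hidx1 : ∀ i : Fin l, (σ * ρ) ⟨(i : ℕ), by have := i.isLt; omega⟩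
        = σ ⟨k + 1 + (i : ℕ), by have := i.isLt; omega⟩ := by
      intro i
      rw [Equiv.Perm.mul_apply]
      refine congrArg σ (Fin.ext ?_)
      rw [hρ]
      show (((finRotate (k+l+1))^(k+1)) ⟨(i:ℕ), by have := i.isLt; omega⟩).val = k + 1 + (i:ℕ)
      rw [rot_val]
      show ((i:ℕ) + (k+1)) % (k+l+1) = k + 1 + (i:ℕ)
      have := i.isLt
      rw [Nat.mod_eq_of_lt (by omega)]
      omega
    have hidx2 : ∀ j : Fin (k+1), (σ * ρ) ⟨l + (j : ℕ), by have := j.isLt; omega⟩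
        = σ ⟨(j : ℕ), by have := j.isLt; omega⟩ := by
      intro j
      rw [Equiv.Perm.mul_apply]
      refine congrArg σ (Fin.ext ?_)
      rw [hρ]
      show (((finRotate (k+l+1))^(k+1)) ⟨l + (j:ℕ), by have := j.isLt; omega⟩).val = (j:ℕ)
      rw [rot_val]
      show (l + (j:ℕ) + (k+1)) % (k+l+1) = (j:ℕ)
      have hj := j.isLt
      have h2 : l + (j:ℕ) + (k+1) = (k + l + 1) + (j:ℕ) := by omega
      rw [h2, Nat.add_mod_left, Nat.mod_eq_of_lt (by omega)]
    show _ = ((-1:ℤ) ^ ((k + 1) * l)) • (((Equiv.Perm.sign (Equiv.mulRight ρ σ) : ℤˣ) : ℤ) •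
        (L (Fin.cons a fun i : Fin l =>
            v ((Equiv.mulRight ρ σ) ⟨(i : ℕ), by have := i.isLt; omega⟩)) *
          K fun j : Fin (k+1) =>
            v ((Equiv.mulRight ρ σ) ⟨l + (j : ℕ), by have := j.isLt; omega⟩)))
    simp only [Equiv.coe_mulRight]
    rw [smul_smul]
    have hsgn : ((-1:ℤ) ^ ((k + 1) * l)) * ((Equiv.Perm.sign (σ * ρ) : ℤˣ) : ℤ)
        = ((Equiv.Perm.sign σ : ℤˣ) : ℤ) := by
      rw [map_mul, Units.val_mul, hsgnρ]
      linear_combination ((Equiv.Perm.sign σ : ℤˣ) : ℤ) * heven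
    rw [hsgn]
    have e1 : (Fin.cons a (fun i : Fin l => v ((σ * ρ) ⟨(i : ℕ), by have := i.isLt; omega⟩))
          : Fin (l+1) → A)
        = Fin.cons a (fun i : Fin l => v (σ ⟨k + 1 + (i : ℕ), by have := i.isLt; omega⟩)) := by
      funext j
      induction j using Fin.cases with
      | zero => simp
      | succ i => rw [Fin.cons_succ, Fin.cons_succ, hidx1 i]
    have e2 : (fun j : Fin (k+1) => v ((σ * ρ) ⟨l + (j : ℕ), by have := j.isLt; omega⟩))
        = (fun j : Fin (k+1) => v (σ ⟨(j : ℕ), by have := j.isLt; omega⟩)) :=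
      funext fun j => congrArg v (hidx2 j)
    exact congrArg (((Equiv.Perm.sign σ : ℤˣ) : ℤ) • ·)
      (congrArg₂ (· * ·) (DFunLike.congr_arg L e1.symm) (DFunLike.congr_arg K e2.symm))
end
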